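/- arXiv:1512.07392 — 2 statements merged into one kernel-verified Lean document; each statement's English description precedes it below -/
import Mathlib

section
/- Fix weights lambda, lambda' > 0 and vectors x, y, z, w, x', y', z', w' in R^d, and let h be in C^3(R^d). Then | lambda (h(x) - h(y) - (h(z) - h(w))) - lambda' (h(x') - h(y') - (h(z') - h(w'))) - <grad h(z), lambda (x - y - (z - w)) - lambda' (x' - y' - (z' - w'))> | is at most M_2(h) * [ ||y' - x'||_2 ||lambda (z - x) - lambda' (z' - x')||_2 + lambda' ||z - z'||_2 ||x' - y' - (z' - w')||_2 + lambda ||z - x||_2 ||(y - x) - (y' - x')||_2 + (1/2)( lambda ||x - y - (z - w)||_2 ||x - y + z - w||_2 + lambda' ||x' - y' - (z' - w')||_2 ||x' - y' + z' - w'||_2 ) ] plus M_3(h) * [ (1/2) ||y' - x'||_2 ( 2 lambda' ||x - x'||_2 ||z' - x'||_2 + lambda ||z - x||_2^2 + lambda' ||z' - x'||_2^2 ) + (1/2)( lambda ||z - x||_2 ||y - x||_2^2 + lambda' ||z' - x'||_2 ||y' - x'||_2^2 ) + (1/6)( lambda ||w - z||_2^3 + lambda ||y - x||_2^3 + lambda'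 ||w' - z'||_2^3 + lambda' ||y' - x'||_2^3 ) ]. -/
/-!
Expand `h` to second order at `z` and at `x` (Taylor with `M₃`-Lipschitz Hessian, remainder
`M₃ ‖·‖³ / 6`). By symmetry of the Hessian the two quadratic terms combine into
`½ ∇²h(z)[x - y - (z - w), -(x - y + z - w)]` plus a Hessian difference between `z` and `x`, and
what is left of the gradient terms is the first difference `(∇h z - ∇h x)(y - x)`, and likewise
for the primed points. The weighted difference of these two first differences is controlled by
first-order Taylor expansions of `∇h` at `x` and `x'` and a Hessian difference between `x` and `x'`.
-/

open Set
open scoped RealInnerProductSpace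

section

variable {E F : Type*} [NormedAddCommGroup E] [NormedSpace ℝ E]
  [NormedAddCommGroup F] [NormedSpace ℝ F]

theorem norm_sub_le_of_norm_deriv_le_mul_pow {φ φ' : ℝ → F} {C : ℝ} {n : ℕ}
    (hφ : ∀ t, HasDerivAt φ (φ' t) t) (hφ' : ∀ t ∈ Icc (0 : ℝ) 1, ‖φ' t‖ ≤ C * t ^ n) :
    ‖φ 1 - φ 0‖ ≤ C / (n + 1) := by
  have hB : ∀ t, HasDerivAt (fun s : ℝ => C / (n + 1) * s ^ (n + 1)) (C * t ^ n) t := by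
    intro t
    refine ((hasDerivAt_pow (n + 1) t).const_mul (C / (n + 1))).congr_deriv ?_
    rw [Nat.add_sub_cancel]
    push_cast
    field_simp
  simpa using image_norm_le_of_norm_deriv_right_le_deriv_boundary (f := fun t => φ t - φ 0)
    (fun t _ => ((hφ t).sub_const _).continuousAt.continuousWithinAt)
    (fun t _ => ((hφ t).sub_const _).hasDerivWithinAt) (by simp) hB
    (fun t ht => hφ' t (Ico_subset_Icc_self ht)) (right_mem_Icc.2 zero_le_one)

theorem hasDerivAt_comp_add_smul {g : E → F} {a v : E} {t : ℝ}
    (hg : DifferentiableAt ℝ g (a + t • v)) :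
    HasDerivAt (fun s : ℝ => g (a + s • v)) (fderiv ℝ g (a + t • v) v) t := by
  have hline : HasDerivAt (fun s : ℝ => a + s • v) v t := by
    simpa using ((hasDerivAt_id t).smul_const v).const_add a
  exact hg.hasFDerivAt.comp_hasDerivAt t hline

theorem norm_first_order_taylor_remainder_le {g : E → F} {K : ℝ} (hg : Differentiable ℝ g)
    (hK : ∀ a b, ‖fderiv ℝ g a - fderiv ℝ g b‖ ≤ K * ‖a - b‖) (a v : E) :
    ‖g (a + v) - g a - fderiv ℝ g a v‖ ≤ K / 2 * ‖v‖ ^ 2 := by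
  have hφ : ∀ t : ℝ, HasDerivAt (fun s : ℝ => g (a + s • v) - s • fderiv ℝ g a v)
      (fderiv ℝ g (a + t • v) v - fderiv ℝ g a v) t := fun t =>
    ((hasDerivAt_comp_add_smul (hg _)).sub
      ((hasDerivAt_id t).smul_const (fderiv ℝ g a v))).congr_deriv (by simp)
  have hφ' : ∀ t ∈ Icc (0 : ℝ) 1,
      ‖fderiv ℝ g (a + t • v) v - fderiv ℝ g a v‖ ≤ K * ‖v‖ ^ 2 * t ^ 1 := by
    intro t ht
    calc ‖fderiv ℝ g (a + t • v) v - fderiv ℝ g a v‖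
        ≤ ‖fderiv ℝ g (a + t • v) - fderiv ℝ g a‖ * ‖v‖ :=
          (fderiv ℝ g (a + t • v) - fderiv ℝ g a).le_opNorm v
      _ ≤ K * ‖t • v‖ * ‖v‖ := by
          gcongr
          simpa using hK (a + t • v) a
      _ = K * ‖v‖ ^ 2 * t ^ 1 := by
          rw [norm_smul, Real.norm_of_nonneg ht.1]; ring
  convert norm_sub_le_of_norm_deriv_le_mul_pow hφ hφ' using 2
  · simp
    abel
  · push_cast
    ring

theorem norm_second_order_taylor_remainder_le {g : E → F} {K : ℝ} (hg : Differentiable ℝ g)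
    (hg' : Differentiable ℝ (fderiv ℝ g))
    (hK : ∀ a b, ‖fderiv ℝ (fderiv ℝ g) a - fderiv ℝ (fderiv ℝ g) b‖ ≤ K * ‖a - b‖) (a v : E) :
    ‖g (a + v) - g a - fderiv ℝ g a v - (1 / 2 : ℝ) • fderiv ℝ (fderiv ℝ g) a v v‖
      ≤ K / 6 * ‖v‖ ^ 3 := by
  set B := fderiv ℝ (fderiv ℝ g) a
  have hφ : ∀ t : ℝ, HasDerivAt
      (fun s : ℝ => g (a + s • v) - s • fderiv ℝ g a v - (s ^ 2 / 2) • B v v)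
      ((fderiv ℝ g (a + t • v) - fderiv ℝ g a - B (t • v)) v) t := fun t => by
    refine (((hasDerivAt_comp_add_smul (hg _)).sub
      ((hasDerivAt_id t).smul_const (fderiv ℝ g a v))).sub
      (((hasDerivAt_pow 2 t).div_const 2).smul_const (B v v))).congr_deriv ?_
    simp only [sub_apply, map_smul, smul_apply]
    norm_num
  have hφ' : ∀ t ∈ Icc (0 : ℝ) 1,
      ‖(fderiv ℝ g (a + t • v) - fderiv ℝ g a - B (t • v)) v‖ ≤ K / 2 * ‖v‖ ^ 3 * t ^ 2 := by
    intro t ht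
    calc ‖(fderiv ℝ g (a + t • v) - fderiv ℝ g a - B (t • v)) v‖
        ≤ ‖fderiv ℝ g (a + t • v) - fderiv ℝ g a - B (t • v)‖ * ‖v‖ :=
          ContinuousLinearMap.le_opNorm _ v
      _ ≤ K / 2 * ‖t • v‖ ^ 2 * ‖v‖ := by
          gcongr
          exact norm_first_order_taylor_remainder_le hg' hK a (t • v)
      _ = K / 2 * ‖v‖ ^ 3 * t ^ 2 := by
          rw [norm_smul, Real.norm_of_nonneg ht.1]; ring
  convert norm_sub_le_of_norm_deriv_le_mul_pow hφ hφ' using 2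
  · simp
    abel
  · push_cast
    ring

-- Pointwise rather than `‖fderiv ℝ g a‖ ≤ C`, which fails for `C < 0` when `E` is trivial.
theorem norm_fderiv_apply_le_of_lipschitz {g : E → F} {a : E} {C : ℝ}
    (hg : DifferentiableAt ℝ g a) (hC : ∀ b, ‖g b - g a‖ ≤ C * ‖b - a‖) (u : E) :
    ‖fderiv ℝ g a u‖ ≤ C * ‖u‖ := by
  rcases eq_or_ne u 0 with rfl | hu
  · simp
  have hC₀ : 0 ≤ C := by
    have := (norm_nonneg _).trans (hC (a + u))
    rw [add_sub_cancel_left] at this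
    exact nonneg_of_mul_nonneg_left this (norm_pos_iff.2 hu)
  exact (ContinuousLinearMap.le_opNorm _ u).trans <| by
    gcongr
    exact hg.hasFDerivAt.le_of_lip' hC₀ (Filter.Eventually.of_forall hC)

theorem norm_fderiv_fderiv_sub_le (g : E → F) (a b : E) :
    ‖fderiv ℝ (fderiv ℝ g) a - fderiv ℝ (fderiv ℝ g) b‖
      ≤ ‖iteratedFDeriv ℝ 2 g a - iteratedFDeriv ℝ 2 g b‖ := by
  refine ContinuousLinearMap.opNorm_le_bound₂ _ (norm_nonneg _) fun u v => ?_
  have := (iteratedFDeriv ℝ 2 g a - iteratedFDeriv ℝ 2 g b).le_opNorm ![u, v]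
  simpa [iteratedFDeriv_two_apply, Fin.prod_univ_two, mul_assoc] using this

theorem norm_smul_apply_sub_smul_apply_le {g : E → E →L[ℝ] F} {M2 M3 lam lam' : ℝ}
    (hg : Differentiable ℝ g) (hM2 : ∀ a b, ‖g a - g b‖ ≤ M2 * ‖a - b‖)
    (hM3 : ∀ a b, ‖fderiv ℝ g a - fderiv ℝ g b‖ ≤ M3 * ‖a - b‖) (hlam : 0 ≤ lam)
    (hlam' : 0 ≤ lam') (x y z x' y' z' : E) :
    ‖lam • (g z - g x) (y - x) - lam' • (g z' - g x') (y' - x')‖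
      ≤ M2 * (‖y' - x'‖ * ‖lam • (z - x) - lam' • (z' - x')‖
          + lam * ‖z - x‖ * ‖(y - x) - (y' - x')‖)
        + M3 * (1 / 2 * ‖y' - x'‖ *
          (2 * lam' * ‖x - x'‖ * ‖z' - x'‖ + lam * ‖z - x‖ ^ 2 + lam' * ‖z' - x'‖ ^ 2)) := by
  set B := fderiv ℝ g
  have key : lam • (g z - g x) (y - x) - lam' • (g z' - g x') (y' - x')
      = lam • (g z - g x) ((y - x) - (y' - x'))
        + lam • (g z - g x - B x (z - x)) (y' - x')
        - lam' • (g z' - g x' - B x' (z' - x')) (y' - x')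
        + B x (lam • (z - x) - lam' • (z' - x')) (y' - x')
        + lam' • (B x - B x') (z' - x') (y' - x') := by
    simp only [map_sub, map_smul, sub_apply, smul_apply]
    module
  have hB : ∀ a u, ‖B a u‖ ≤ M2 * ‖u‖ := fun a =>
    norm_fderiv_apply_le_of_lipschitz (hg a) fun b => hM2 b a
  have hR : ∀ a b, ‖g b - g a - B a (b - a)‖ ≤ M3 / 2 * ‖b - a‖ ^ 2 := fun a b => by
    simpa using norm_first_order_taylor_remainder_le hg hM3 a (b - a)
  rw [key]
  grw [norm_add_le, norm_add_le, norm_sub_le, norm_add_le, norm_smul_of_nonneg hlam,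
    norm_smul_of_nonneg hlam, norm_smul_of_nonneg hlam', norm_smul_of_nonneg hlam',
    (g z - g x).le_of_opNorm_le (hM2 z x),
    (_ : E →L[ℝ] F).le_of_opNorm_le (hR x z), (_ : E →L[ℝ] F).le_of_opNorm_le (hR x' z'),
    (B x _).le_of_opNorm_le (hB x _),
    (B x - B x').le_of_opNorm₂_le_of_le (hM3 x x') le_rfl le_rfl]
  exact le_of_eq (by ring)

theorem abs_second_difference_sub_fderiv_le {h : E → ℝ} {M2 M3 : ℝ} (hh : Differentiable ℝ h)
    (hh' : Differentiable ℝ (fderiv ℝ h))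
    (hM2 : ∀ a b, ‖fderiv ℝ h a - fderiv ℝ h b‖ ≤ M2 * ‖a - b‖)
    (hM3 : ∀ a b, ‖fderiv ℝ (fderiv ℝ h) a - fderiv ℝ (fderiv ℝ h) b‖ ≤ M3 * ‖a - b‖)
    (p x y z w : E) :
    |h x - h y - (h z - h w) - fderiv ℝ h p (x - y - (z - w))
        - (fderiv ℝ h z - fderiv ℝ h x) (y - x)|
      ≤ M2 * (‖z - p‖ * ‖x - y - (z - w)‖ + 1 / 2 * ‖x - y - (z - w)‖ * ‖x - y + z - w‖)
        + M3 * (1 / 2 * ‖z - x‖ * ‖y - x‖ ^ 2 + 1 / 6 * (‖w - z‖ ^ 3 + ‖y - x‖ ^ 3)) := by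
  set f := fderiv ℝ h
  set B := fderiv ℝ f
  obtain ⟨u, rfl⟩ : ∃ u, w = z + u := ⟨w - z, by abel⟩
  obtain ⟨v, rfl⟩ : ∃ v, y = x + v := ⟨y - x, by abel⟩
  rw [show x - (x + v) - (z - (z + u)) = u - v by abel,
    show x - (x + v) + z - (z + u) = -(u + v) by abel, add_sub_cancel_left, add_sub_cancel_left,
    norm_neg]
  have hTaylor : ∀ a v, ‖h (a + v) - h a - f a v - 1 / 2 * B a v v‖ ≤ M3 / 6 * ‖v‖ ^ 3 :=
    fun a v => by
      simpa only [smul_eq_mul] using norm_second_order_taylor_remainder_le hh hh' hM3 a v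
  have hsymm : B z u v = B z v u :=
    second_derivative_symmetric (fun y => (hh y).hasFDerivAt) (hh' z).hasFDerivAt u v
  -- Taylor expansions at `z` and `x`; by symmetry, `B z u u - B z v v = B z (u - v) (u + v)`.
  have key : h x - h (x + v) - (h z - h (z + u)) - f p (u - v) - (f z - f x) v
      = (f z - f p) (u - v) + 1 / 2 * B z (u - v) (u + v) + 1 / 2 * (B z - B x) v v
        + (h (z + u) - h z - f z u - 1 / 2 * B z u u)
        - (h (x + v) - h x - f x v - 1 / 2 * B x v v) := by
    simp only [map_sub, map_add, sub_apply]
    linear_combination (-1 / 2 : ℝ) * hsymm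
  have hB : ∀ a u, ‖B a u‖ ≤ M2 * ‖u‖ := fun a =>
    norm_fderiv_apply_le_of_lipschitz (hh' a) fun b => hM2 b a
  rw [key, ← Real.norm_eq_abs]
  grw [norm_sub_le, norm_add_le, norm_add_le, norm_add_le, norm_mul, norm_mul, hTaylor, hTaylor,
    (f z - f p).le_of_opNorm_le (hM2 z p), (B z _).le_of_opNorm_le (hB z _),
    (B z - B x).le_of_opNorm₂_le_of_le (hM3 z x) le_rfl le_rfl,
    Real.norm_of_nonneg one_half_pos.le]
  exact le_of_eq (by ring)

end

/-- Third-order weighted difference bound (Lemma 3, inequality (5) of the paper):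
for weights `λ, λ' > 0`, points `x, y, z, w, x', y', z', w' ∈ ℝ^d`, and `h ∈ C³(ℝ^d)`
with `M₂(h) ≤ M2` (Lipschitz constant of the gradient) and `M₃(h) ≤ M3`
(Lipschitz constant of the Hessian, `ℓ₂` operator norms). -/
theorem third_order_weighted_difference_bound {d : ℕ}
    (lam lam' : ℝ) (hlam : 0 < lam) (hlam' : 0 < lam')
    (x y z w x' y' z' w' : EuclideanSpace ℝ (Fin d))
    (h : EuclideanSpace ℝ (Fin d) → ℝ) (hh : ContDiff ℝ 3 h)
    (M2 M3 : ℝ)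
    (hM2 : ∀ a b, ‖fderiv ℝ h a - fderiv ℝ h b‖ ≤ M2 * ‖a - b‖)
    (hM3 : ∀ a b, ‖iteratedFDeriv ℝ 2 h a - iteratedFDeriv ℝ 2 h b‖ ≤ M3 * ‖a - b‖) :
    |lam * (h x - h y - (h z - h w)) - lam' * (h x' - h y' - (h z' - h w'))
        - ⟪gradient h z, lam • (x - y - (z - w)) - lam' • (x' - y' - (z' - w'))⟫|
      ≤ M2 * (‖y' - x'‖ * ‖lam • (z - x) - lam' • (z' - x')‖
            + lam' * ‖z - z'‖ * ‖x' - y' - (z' - w')‖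
            + lam * ‖z - x‖ * ‖(y - x) - (y' - x')‖
            + (1 / 2) * (lam * ‖x - y - (z - w)‖ * ‖x - y + z - w‖
                + lam' * ‖x' - y' - (z' - w')‖ * ‖x' - y' + z' - w'‖))
        + M3 * ((1 / 2) * ‖y' - x'‖ *
              (2 * lam' * ‖x - x'‖ * ‖z' - x'‖ + lam * ‖z - x‖ ^ 2 + lam' * ‖z' - x'‖ ^ 2)
            + (1 / 2) * (lam * ‖z - x‖ * ‖y - x‖ ^ 2 + lam' * ‖z' - x'‖ * ‖y' - x'‖ ^ 2)
            + (1 / 6) * (lam * ‖w - z‖ ^ 3 + lam * ‖y - x‖ ^ 3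
                + lam' * ‖w' - z'‖ ^ 3 + lam' * ‖y' - x'‖ ^ 3)) := by
  have hh1 : Differentiable ℝ h := hh.differentiable (by norm_num)
  have hh2 : Differentiable ℝ (fderiv ℝ h) :=
    (hh.fderiv_right (m := 2) (by norm_num)).differentiable (by norm_num)
  have hM3' a b := (norm_fderiv_fderiv_sub_le h a b).trans (hM3 a b)
  set f := fderiv ℝ h
  set Q := h x - h y - (h z - h w) - f z (x - y - (z - w)) - (f z - f x) (y - x)
  set Q' := h x' - h y' - (h z' - h w') - f z (x' - y' - (z' - w')) - (f z' - f x') (y' - x')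
  have hQ := abs_second_difference_sub_fderiv_le hh1 hh2 hM2 hM3' z x y z w
  have hQ' := abs_second_difference_sub_fderiv_le hh1 hh2 hM2 hM3' z x' y' z' w'
  have hC := norm_smul_apply_sub_smul_apply_le hh2 hM2 hM3' hlam.le hlam'.le x y z x' y' z'
  rw [Real.norm_eq_abs, smul_eq_mul, smul_eq_mul] at hC
  have split : lam * (h x - h y - (h z - h w)) - lam' * (h x' - h y' - (h z' - h w'))
        - ⟪gradient h z, lam • (x - y - (z - w)) - lam' • (x' - y' - (z' - w'))⟫
      = lam * Q - lam' * Q' + (lam * (f z - f x) (y - x) - lam' * (f z' - f x') (y' - x')) := by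
    rw [inner_gradient_left, map_sub, map_smul, map_smul, smul_eq_mul, smul_eq_mul]
    ring
  rw [split]
  grw [abs_add_le, abs_sub, abs_mul, abs_mul, abs_of_pos hlam, abs_of_pos hlam', hQ, hQ', hC,
    sub_self, norm_zero, norm_sub_rev z' z]
  exact le_of_eq (by ring)
end

section
/- Let h be in C^3(R^d) and let x, y, z, w in R^d. Then | <Hess h(z)(w - z), w - z> - <Hess h(x)(y - x), y - x> | <= M_2(h) * ||x - y - (z - w)||_2 * ||x - y + z - w||_2 + M_3(h) * ||z - x||_2 * ||y - x||_2^2. -/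
/-!
Write `u = w - z` and `v = y - x`. Passing from `D²h(z)[u, u]` to `D²h(z)[v, v]` costs
`D²h(z)[u - v, u + v]` by symmetry of the Hessian, which the Lipschitz bound on `∇h` controls;
passing from `D²h(z)[v, v]` to `D²h(x)[v, v]` is controlled by the Lipschitz bound on `D²h`.
-/

section

variable {E F : Type*} [NormedAddCommGroup E] [NormedSpace ℝ E]
  [NormedAddCommGroup F] [NormedSpace ℝ F]

theorem ContinuousLinearMap.apply_self_sub_apply_self_of_symm (B : E →L[ℝ] E →L[ℝ] F)
    (hB : ∀ p q, B p q = B q p) (u v : E) : B u u - B v v = B (u - v) (u + v) := by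
  simp only [map_sub, map_add, sub_apply, hB v u]
  abel

theorem norm_fderiv_apply_le_of_norm_sub_le {g : E → F} {C : ℝ}
    (hg : ∀ a b, ‖g a - g b‖ ≤ C * ‖a - b‖) (z p : E) : ‖fderiv ℝ g z p‖ ≤ C * ‖p‖ := by
  rcases eq_or_ne p 0 with rfl | hp
  · simp
  have hC : 0 ≤ C := by
    have := (norm_nonneg _).trans (hg (z + p) z)
    rw [add_sub_cancel_left] at this
    exact nonneg_of_mul_nonneg_left this (norm_pos_iff.2 hp)
  have hnorm : ‖fderiv ℝ g z‖ ≤ C := norm_fderiv_le_of_lip' ℝ hC (.of_forall fun a ↦ hg a z)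
  exact (fderiv ℝ g z).le_of_opNorm_le hnorm p

theorem abs_iteratedFDeriv_two_sub_of_fderiv_lipschitz {f : E → ℝ} {z : E}
    (hf : ContDiffAt ℝ 2 f z) {C : ℝ}
    (hC : ∀ a b, ‖fderiv ℝ f a - fderiv ℝ f b‖ ≤ C * ‖a - b‖) (u v : E) :
    |iteratedFDeriv ℝ 2 f z ![u, u] - iteratedFDeriv ℝ 2 f z ![v, v]|
      ≤ C * ‖u - v‖ * ‖u + v‖ := by
  have hsymm : ∀ p q, fderiv ℝ (fderiv ℝ f) z p q = fderiv ℝ (fderiv ℝ f) z q p :=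
    hf.isSymmSndFDerivAt (by simp)
  simp only [iteratedFDeriv_two_apply, Matrix.cons_val_zero, Matrix.cons_val_one,
    ContinuousLinearMap.apply_self_sub_apply_self_of_symm _ hsymm, ← Real.norm_eq_abs]
  calc ‖fderiv ℝ (fderiv ℝ f) z (u - v) (u + v)‖
      ≤ ‖fderiv ℝ (fderiv ℝ f) z (u - v)‖ * ‖u + v‖ := ContinuousLinearMap.le_opNorm _ _
    _ ≤ C * ‖u - v‖ * ‖u + v‖ := by
      gcongr
      exact norm_fderiv_apply_le_of_norm_sub_le hC z (u - v)

theorem norm_iteratedFDeriv_sub_apply_le {f : E → F} {n : ℕ} {C : ℝ}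
    (hC : ∀ a b, ‖iteratedFDeriv ℝ n f a - iteratedFDeriv ℝ n f b‖ ≤ C * ‖a - b‖)
    (z x : E) (m : Fin n → E) :
    ‖iteratedFDeriv ℝ n f z m - iteratedFDeriv ℝ n f x m‖ ≤ C * ‖z - x‖ * ∏ i, ‖m i‖ :=
  (iteratedFDeriv ℝ n f z - iteratedFDeriv ℝ n f x).le_of_opNorm_le (hC z x) m

end

/-- Hessian quadratic-form difference bound: for `h ∈ C³(ℝ^d)` and `x, y, z, w ∈ ℝ^d`,
`|⟨∇²h(z)(w - z), w - z⟩ - ⟨∇²h(x)(y - x), y - x⟩|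
  ≤ M₂(h) ‖x - y - (z - w)‖ ‖x - y + z - w‖ + M₃(h) ‖z - x‖ ‖y - x‖²`,
where `M₂(h) ≤ M2` is the Lipschitz constant of the gradient and `M₃(h) ≤ M3` that of the
Hessian (`ℓ₂` operator norms). -/
theorem hessian_quadratic_difference_bound {d : ℕ}
    (h : EuclideanSpace ℝ (Fin d) → ℝ) (hh : ContDiff ℝ 3 h)
    (x y z w : EuclideanSpace ℝ (Fin d))
    (M2 M3 : ℝ)
    (hM2 : ∀ a b, ‖fderiv ℝ h a - fderiv ℝ h b‖ ≤ M2 * ‖a - b‖)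
    (hM3 : ∀ a b, ‖iteratedFDeriv ℝ 2 h a - iteratedFDeriv ℝ 2 h b‖ ≤ M3 * ‖a - b‖) :
    |iteratedFDeriv ℝ 2 h z ![w - z, w - z] - iteratedFDeriv ℝ 2 h x ![y - x, y - x]|
      ≤ M2 * ‖x - y - (z - w)‖ * ‖x - y + z - w‖ + M3 * ‖z - x‖ * ‖y - x‖ ^ 2 := by
  have e1 : x - y - (z - w) = (w - z) - (y - x) := by abel
  have e2 : ‖x - y + z - w‖ = ‖(w - z) + (y - x)‖ := by rw [← norm_neg]; congr 1; abel
  have hsame_point := abs_iteratedFDeriv_two_sub_of_fderiv_lipschitz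
    ((hh.contDiffAt (x := z)).of_le (by norm_num)) hM2 (w - z) (y - x)
  have hsame_vector := norm_iteratedFDeriv_sub_apply_le hM3 z x ![y - x, y - x]
  simp only [Fin.prod_univ_two, Matrix.cons_val_zero, Matrix.cons_val_one, Matrix.cons_val_fin_one,
    Real.norm_eq_abs] at hsame_vector
  rw [e1, e2]
  calc _ ≤ |iteratedFDeriv ℝ 2 h z ![w - z, w - z] - iteratedFDeriv ℝ 2 h z ![y - x, y - x]|
        + |iteratedFDeriv ℝ 2 h z ![y - x, y - x] - iteratedFDeriv ℝ 2 h x ![y - x, y - x]| :=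
        abs_sub_le _ _ _
    _ ≤ _ := by rw [sq]; exact add_le_add hsame_point hsame_vector
end
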